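/- arXiv:1707.09176 — 3 statements merged into one kernel-verified Lean document; each statement's English description precedes it below -/
import Mathlib

section
/- Let n ≥ 1 and define U^Q := {(v, v mod 2) : v ∈ (ℤ/4)^n} with the operation (u, u mod 2)∘(v, v mod 2) = (u + (−1)^{u mod 2} v, (u+v) mod 2), where the first component is computed in (ℤ/4)^n with ((−1)^{u mod 2} v)_α = (−1)^{u_α mod 2} v_α. Then U^Q is an abelian group. -/
/-- Reduction modulo 2 of an element of `ℤ/4`. -/
def mod2of4 : ZMod 4 → ZMod 2 := ZMod.castHom (show (2:ℕ) ∣ 4 by norm_num) (ZMod 2)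

/-- Coordinatewise sign change of `v ∈ (ℤ/4)^n` determined by `ρ ∈ (ℤ/2)^n`. -/
def sgnQ {n : ℕ} (ρ : Fin n → ZMod 2) (v : Fin n → ZMod 4) : Fin n → ZMod 4 :=
  fun α => if ρ α = 0 then v α else -v α

/-- The composition `(u,ρ)∘(v,σ) = (u + (−1)^ρ v, ρ + σ)` on pairs in
`(ℤ/4)^n × (ℤ/2)^n`. -/
def opQ {n : ℕ} (x y : (Fin n → ZMod 4) × (Fin n → ZMod 2)) :
    (Fin n → ZMod 4) × (Fin n → ZMod 2) :=
  (x.1 + sgnQ x.2 y.1, x.2 + y.2)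

/-- The set `U^Q = {(v, v mod 2) : v ∈ (ℤ/4)^n}`. -/
def UQ (n : ℕ) : Set ((Fin n → ZMod 4) × (Fin n → ZMod 2)) :=
  {x | x.2 = fun α => mod2of4 (x.1 α)}


lemma key_closed : ∀ a b : ZMod 4,
    mod2of4 a + mod2of4 b = mod2of4 (a + if mod2of4 a = 0 then b else -b) := by decide

lemma key_inv : ∀ a : ZMod 4, a + (if mod2of4 a = 0 then a else -a) = 0 := by decide

lemma key_comm : ∀ a b : ZMod 4,
    a + (if mod2of4 a = 0 then b else -b) = b + (if mod2of4 b = 0 then a else -a) := by decide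

lemma key_assoc : ∀ a b c : ZMod 4,
    (a + if mod2of4 a = 0 then b else -b) +
      (if mod2of4 a + mod2of4 b = 0 then c else -c) =
    a + if mod2of4 a = 0 then (b + if mod2of4 b = 0 then c else -c)
        else -(b + if mod2of4 b = 0 then c else -c) := by decide

/-- `U^Q` is an abelian group under `opQ`: it is closed under the composition,
contains the identity `(0,0)`, every element is self-inverse, and the
composition is commutative and associative. -/
theorem stmt4 (n : ℕ) (hn : 1 ≤ n) :
    ((0, 0) ∈ UQ n) ∧
    (∀ x ∈ UQ n, ∀ y ∈ UQ n, opQ x y ∈ UQ n) ∧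
    (∀ x ∈ UQ n, opQ (0, 0) x = x ∧ opQ x (0, 0) = x) ∧
    (∀ x ∈ UQ n, opQ x x = (0, 0)) ∧
    (∀ x ∈ UQ n, ∀ y ∈ UQ n, opQ x y = opQ y x) ∧
    (∀ x ∈ UQ n, ∀ y ∈ UQ n, ∀ z ∈ UQ n, opQ (opQ x y) z = opQ x (opQ y z)) := by
  refine ⟨?_, ?_, ?_, ?_, ?_, ?_⟩
  · show (0 : Fin n → ZMod 2) = _
    funext α; simp [mod2of4]
  · rintro ⟨u, ρ⟩ hx ⟨v, σ⟩ hy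
    simp only [UQ, Set.mem_setOf_eq] at hx hy ⊢
    funext α
    simp only [opQ, sgnQ, Pi.add_apply, hx, hy]
    exact key_closed (u α) (v α)
  · rintro ⟨u, ρ⟩ hx
    constructor
    · simp only [opQ, sgnQ, Prod.mk.injEq]
      constructor
      · funext α; simp [sgnQ]
      · simp
    · simp only [opQ, sgnQ, Prod.mk.injEq]
      constructor
      · funext α; simp [sgnQ]
      · simp
  · rintro ⟨u, ρ⟩ hx
    simp only [UQ, Set.mem_setOf_eq] at hx
    simp only [opQ, sgnQ, Prod.mk.injEq]
    constructor
    · funext α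
      simp only [Pi.add_apply, hx, Pi.zero_apply]
      exact key_inv (u α)
    · funext α
      simp only [Pi.add_apply, hx, Pi.zero_apply]
      exact CharTwo.add_self_eq_zero _
  · rintro ⟨u, ρ⟩ hx ⟨v, σ⟩ hy
    simp only [UQ, Set.mem_setOf_eq] at hx hy
    simp only [opQ, sgnQ, Prod.mk.injEq]
    refine ⟨funext fun α => ?_, add_comm _ _⟩
    simp only [Pi.add_apply, hx, hy]
    exact key_comm (u α) (v α)
  · rintro ⟨u, ρ⟩ hx ⟨v, σ⟩ hy ⟨w, τ⟩ hz
    simp only [UQ, Set.mem_setOf_eq] at hx hy hz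
    simp only [opQ, sgnQ, Prod.mk.injEq]
    refine ⟨funext fun α => ?_, add_assoc _ _ _⟩
    simp only [Pi.add_apply, hx, hy, hz]
    exact key_assoc (u α) (v α) (w α)
end

section
/- Let n ≥ 1, let H ≤ (ℤ/2)^n be the subgroup generated by the vectors ρ^β (with 0 in position β and 1 elsewhere), and let U^Q := {(v, v mod 2) : v ∈ (ℤ/4)^n, v mod 2 ∈ H}. Then |U^Q| = 2^{2n} if n is even and |U^Q| = 2^{2n−1} if n is odd. -/
/-- Coordinatewise mod-2 reduction as an additive hom. -/
def phiHom (n : ℕ) : (Fin n → ZMod 4) →+ (Fin n → ZMod 2) where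
  toFun v := fun α => mod2of4 (v α)
  map_zero' := funext fun α => map_zero (ZMod.castHom (show (2:ℕ) ∣ 4 by norm_num) (ZMod 2))
  map_add' v w := funext fun α =>
    map_add (ZMod.castHom (show (2:ℕ) ∣ 4 by norm_num) (ZMod 2)) (v α) (w α)

/-- Sum of coordinates as an additive hom. -/
def sumHom (n : ℕ) : (Fin n → ZMod 2) →+ ZMod 2 where
  toFun w := ∑ α, w α
  map_zero' := by simp
  map_add' v w := by simp [Finset.sum_add_distrib]

lemma zmod2_cases (x : ZMod 2) : x = 0 ∨ x = 1 := by revert x; decide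

lemma key_sum (n : ℕ) (ρ : Fin n → Fin n → ZMod 2)
    (hρ : ∀ β α, ρ β α = if α = β then 0 else 1)
    (s : Finset (Fin n)) (α : Fin n) :
    (∑ β ∈ s, ρ β) α = (s.card : ZMod 2) + (if α ∈ s then 1 else 0) := by
  have h1 : ∀ β, (if α = β then (0:ZMod 2) else 1) = 1 + (if α = β then 1 else 0) := by
    intro β; split <;> decide
  rw [Finset.sum_apply]
  simp only [hρ, h1, Finset.sum_add_distrib, Finset.sum_const, Finset.sum_ite_eq s α fun _ => (1:ZMod 2)]
  rw [nsmul_eq_mul, mul_one]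

lemma card_filter_cast (n : ℕ) (w : Fin n → ZMod 2) :
    (((Finset.univ.filter fun β => w β = 1).card : ZMod 2)) = ∑ α, w α := by
  have hw : ∀ α, w α = if w α = 1 then 1 else 0 := fun α => by
    rcases zmod2_cases (w α) with h | h <;> simp [h]
  calc ((Finset.univ.filter fun β => w β = 1).card : ZMod 2)
      = ∑ α ∈ Finset.univ.filter fun β => w β = 1, 1 := by simp
    _ = ∑ α, if w α = 1 then (1:ZMod 2) else 0 := (Finset.sum_filter _ _)
    _ = ∑ α, w α := Finset.sum_congr rfl fun α _ => (hw α).symm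

lemma indicator_eq (n : ℕ) (w : Fin n → ZMod 2) (α : Fin n) :
    (if α ∈ (Finset.univ.filter fun β => w β = 1) then (1:ZMod 2) else 0) = w α := by
  rcases zmod2_cases (w α) with h | h <;> simp [h]

/-- `|U^Q| = 2^{2n}` for `n` even and `|U^Q| = 2^{2n−1}` for `n` odd, where
`U^Q = {(v, v mod 2) : v ∈ (ℤ/4)^n, v mod 2 ∈ H}` and
`H = ⟨ρ^1,…,ρ^n⟩ ≤ (ℤ/2)^n`. -/
theorem stmt7 (n : ℕ) (hn : 1 ≤ n)
    (ρ : Fin n → Fin n → ZMod 2)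
    (hρ : ∀ β α, ρ β α = if α = β then 0 else 1) :
    Nat.card {x : (Fin n → ZMod 4) × (Fin n → ZMod 2) |
        x.2 = (fun α => mod2of4 (x.1 α)) ∧
        x.2 ∈ AddSubgroup.closure (Set.range ρ)} =
      if Even n then 2 ^ (2 * n) else 2 ^ (2 * n - 1) := by
  classical
  set H := AddSubgroup.closure (Set.range ρ) with hH
  have add_self : ∀ a : ZMod 2, a + a = 0 := by decide
  -- step 1: bijection with {v | f v ∈ H}
  have e1 : Nat.card {x : (Fin n → ZMod 4) × (Fin n → ZMod 2) |
        x.2 = (fun α => mod2of4 (x.1 α)) ∧ x.2 ∈ H}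
      = Nat.card {v : Fin n → ZMod 4 // (fun α => mod2of4 (v α)) ∈ H} := by
    apply Nat.card_congr
    refine ⟨fun x => ⟨x.1.1, x.2.1 ▸ x.2.2⟩,
      fun v => ⟨(v.1, fun α => mod2of4 (v.1 α)), rfl, v.2⟩, ?_, fun v => rfl⟩
    rintro ⟨⟨a, b⟩, hb, hmem⟩
    exact Subtype.ext (Prod.ext rfl hb.symm)
  rw [e1]
  by_cases hev : Even n
  · -- H = ⊤
    have htop : H = ⊤ := by
      rw [eq_top_iff]
      intro w _
      set s : Finset (Fin n) := Finset.univ.filter fun β => w β = 1 with hs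
      have hcast : ((n : ZMod 2)) = 0 := by
        rw [(ZMod.natCast_eq_zero_iff n 2)]
        exact hev.two_dvd
      have hone : ∀ α, (∑ β, ρ β) α = 1 := by
        intro α
        have := key_sum n ρ hρ Finset.univ α
        simpa [hcast] using this
      have hw : w = (∑ β ∈ s, ρ β) + s.card • (∑ β, ρ β) := by
        funext α
        rw [Pi.add_apply, key_sum n ρ hρ s α, Pi.smul_apply, hone, indicator_eq,
          nsmul_eq_mul, mul_one]
        rw [add_comm ((s.card : ZMod 2)) (w α), add_assoc, add_self, add_zero]
      rw [hw]
      exact add_mem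
        (AddSubgroup.sum_mem _ fun β _ => AddSubgroup.subset_closure (Set.mem_range_self β))
        (AddSubgroup.nsmul_mem _
          (AddSubgroup.sum_mem _ fun β _ => AddSubgroup.subset_closure (Set.mem_range_self β)) _)
    have : Nat.card {v : Fin n → ZMod 4 // (fun α => mod2of4 (v α)) ∈ H}
        = Nat.card (Fin n → ZMod 4) := by
      apply Nat.card_congr
      exact Equiv.subtypeUnivEquiv (by simp [htop])
    rw [this, if_pos hev]
    simp only [Nat.card_eq_fintype_card, Fintype.card_fun, ZMod.card, Fintype.card_fin]
    rw [pow_mul]; norm_num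
  · -- n odd : H = ker (sumHom n)
    have hodd : n % 2 = 1 := Nat.odd_iff.mp (Nat.not_even_iff_odd.mp hev)
    have hncast : ((n : ZMod 2)) = 1 := by
      rw [← ZMod.natCast_mod, hodd]; rfl
    have hker : H = (sumHom n).ker := by
      apply le_antisymm
      · rw [hH]
        rw [AddSubgroup.closure_le]
        rintro _ ⟨β, rfl⟩
        show sumHom n (ρ β) = 0
        calc sumHom n (ρ β) = ∑ α, (ρ β) α := rfl
          _ = (∑ γ ∈ Finset.univ, ρ γ) β := by
              rw [Finset.sum_apply]
              refine Finset.sum_congr rfl fun α _ => ?_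
              rw [hρ, hρ]; simp [eq_comm]
          _ = 0 := by
              rw [key_sum n ρ hρ Finset.univ β]
              simp [hncast, add_self]
      · intro w hw
        rw [AddMonoidHom.mem_ker] at hw
        have hw' : (∑ α, w α) = 0 := hw
        set s : Finset (Fin n) := Finset.univ.filter fun β => w β = 1 with hs
        have hcard : ((s.card : ZMod 2)) = 0 := by
          rw [hs, card_filter_cast n w, hw']
        have hweq : w = ∑ β ∈ s, ρ β := by
          funext α
          rw [key_sum n ρ hρ s α, hcard, indicator_eq, zero_add]
        rw [hweq]
        exact AddSubgroup.sum_mem _ fun β _ => AddSubgroup.subset_closure (Set.mem_range_self β)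
    set G : (Fin n → ZMod 4) →+ ZMod 2 := (sumHom n).comp (phiHom n) with hG
    have e2 : Nat.card {v : Fin n → ZMod 4 // (fun α => mod2of4 (v α)) ∈ H}
        = Nat.card G.ker := by
      apply Nat.card_congr
      apply Equiv.subtypeEquivRight
      intro v
      rw [hker]
      exact Iff.rfl
    rw [e2, if_neg hev]
    -- G is surjective
    have hsurj : Function.Surjective G := by
      intro c
      rcases zmod2_cases c with h | h
      · exact ⟨0, by rw [map_zero, h]⟩
      · refine ⟨fun α => if α = (⟨0, hn⟩ : Fin n) then 1 else 0, ?_⟩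
        have hGv : G (fun α => if α = (⟨0, hn⟩ : Fin n) then (1:ZMod 4) else 0)
            = ∑ x : Fin n, mod2of4 (if x = (⟨0, hn⟩ : Fin n) then (1:ZMod 4) else 0) := rfl
        rw [hGv, h]
        have hmod : ∀ x : Fin n, mod2of4 (if x = (⟨0, hn⟩ : Fin n) then (1:ZMod 4) else 0)
            = if x = (⟨0, hn⟩ : Fin n) then (1:ZMod 2) else 0 := by
          intro x; split <;> first | (simp [mod2of4]; decide) | simp [mod2of4]
        simp only [hmod]
        simp [Finset.sum_ite_eq']
    have hrange : Nat.card G.range = 2 := by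
      rw [(AddMonoidHom.range_eq_top).mpr hsurj,
        Nat.card_congr AddSubgroup.topEquiv.toEquiv]
      simp [Nat.card_eq_fintype_card]
    have hmul : Nat.card G.ker * G.ker.index = Nat.card (Fin n → ZMod 4) :=
      AddSubgroup.card_mul_index G.ker
    rw [AddSubgroup.index_ker, hrange] at hmul
    have hcardfun : Nat.card (Fin n → ZMod 4) = 2 ^ (2 * n) := by
      simp only [Nat.card_eq_fintype_card, Fintype.card_fun, ZMod.card, Fintype.card_fin]
      rw [pow_mul]; norm_num
    rw [hcardfun] at hmul
    have h2n : 2 * n = (2 * n - 1) + 1 := by clear! H G; omega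
    rw [h2n, pow_succ] at hmul
    exact Nat.eq_of_mul_eq_mul_right (by norm_num) hmul
end

section
/- Let S^Q be a group of pairs (v, v mod 2) with v ∈ (ℤ/4)^n and composition (u, u mod 2)∘(v, v mod 2) = (u + (−1)^{u mod 2} v, (u+v) mod 2). For a ∈ (2ℤ/4)^n (vectors with all coordinates even), set L^a := {(v, v mod 2) ∈ S^Q : v − a ∈ {0,1}^n}, where {0,1}^n means every coordinate of v − a is 0 or 1 in ℤ/4. Then for all a, b ∈ (2ℤ/4)^n and all w ∈ L^a, z ∈ L^b, the composition w∘z lies in L^{a+b}. -/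
/-- `(−1)^{u mod 2} v` in `(ℤ/4)^n`. -/
def sgn4 {n : ℕ} (u v : Fin n → ZMod 4) : Fin n → ZMod 4 :=
  fun α => if (u α).val % 2 = 0 then v α else -v α

/-- The composition of `S^Q` on translational parts:
`(u, u mod 2)∘(v, v mod 2) = (u + (−1)^{u mod 2} v, (u+v) mod 2)`. -/
def qmul {n : ℕ} (u v : Fin n → ZMod 4) : Fin n → ZMod 4 :=
  u + sgn4 u v

/-- `L^a = {(v, v mod 2) ∈ S^Q : v − a ∈ {0,1}^n}`, on translational parts. -/
def Lset {n : ℕ} (S : Set (Fin n → ZMod 4)) (a : Fin n → ZMod 4) :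
    Set (Fin n → ZMod 4) :=
  {v ∈ S | ∀ α, (v - a) α = 0 ∨ (v - a) α = 1}

/-- Coset lemma: if `S^Q` is closed under the composition, `a, b` have all
coordinates in `{0,2} ⊂ ℤ/4`, `w ∈ L^a` and `z ∈ L^b`, then `w∘z ∈ L^{a+b}`. -/
theorem stmt9 (n : ℕ) (S : Set (Fin n → ZMod 4))
    (hS : ∀ u ∈ S, ∀ v ∈ S, qmul u v ∈ S)
    (a b : Fin n → ZMod 4)
    (ha : ∀ α, a α = 0 ∨ a α = 2) (hb : ∀ α, b α = 0 ∨ b α = 2)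
    (w z : Fin n → ZMod 4) (hw : w ∈ Lset S a) (hz : z ∈ Lset S b) :
    qmul w z ∈ Lset S (a + b) := by
  obtain ⟨hwS, hwa⟩ := hw
  obtain ⟨hzS, hzb⟩ := hz
  refine ⟨hS w hwS z hzS, fun α => ?_⟩
  have hwa' := hwa α
  have hzb' := hzb α
  simp only [Pi.sub_apply] at hwa' hzb'
  simp only [qmul, sgn4, Pi.add_apply, Pi.sub_apply]
  have hW : w α = a α + (w α - a α) := by ring
  have hZ : z α = b α + (z α - b α) := by ring
  rcases ha α with h | h <;> rcases hb α with h' | h' <;>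
    rcases hwa' with he | he <;> rcases hzb' with hd | hd <;>
    rw [he, h] at hW <;> rw [hd, h'] at hZ <;>
    rw [hW, hZ, h, h'] <;> decide
end
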